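/- The Ricci tensor of the Vaidya metric is Weyl-compatible: C(𝒮X₁, X, X₂, X₃) + C(𝒮X₂, X, X₃, X₁) + C(𝒮X₃, X, X₁, X₂) = 0 for all vector fields, where C is the Weyl conformal curvature tensor and 𝒮 the Ricci operator. -/

import Mathlib

noncomputable section

open Real

/-- Partial derivative of a scalar function on `ℝ⁴` in the `i`-th coordinate direction. -/
def pd (i : Fin 4) (f : (Fin 4 → ℝ) → ℝ) (x : Fin 4 → ℝ) : ℝ :=
  fderiv ℝ f x (Pi.single i 1)

/-- The Vaidya metric components in `(u,r,θ,φ)`-coordinates. -/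
def gV (m : ℝ → ℝ) (x : Fin 4 → ℝ) (i j : Fin 4) : ℝ :=
  if i = 0 ∧ j = 0 then -1 + 2 * m (x 0) / x 1
  else if (i = 0 ∧ j = 1) ∨ (i = 1 ∧ j = 0) then -1
  else if i = 2 ∧ j = 2 then (x 1) ^ 2
  else if i = 3 ∧ j = 3 then (x 1) ^ 2 * Real.sin (x 2) ^ 2
  else 0

/-- The inverse Vaidya metric components. -/
def gVinv (m : ℝ → ℝ) (x : Fin 4 → ℝ) (i j : Fin 4) : ℝ :=
  if (i = 0 ∧ j = 1) ∨ (i = 1 ∧ j = 0) then -1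
  else if i = 1 ∧ j = 1 then 1 - 2 * m (x 0) / x 1
  else if i = 2 ∧ j = 2 then 1 / (x 1) ^ 2
  else if i = 3 ∧ j = 3 then 1 / ((x 1) ^ 2 * Real.sin (x 2) ^ 2)
  else 0

/-- Christoffel symbols `Γ^k_{ij}` of the Levi-Civita connection of the Vaidya metric. -/
def Chr (m : ℝ → ℝ) (x : Fin 4 → ℝ) (k i j : Fin 4) : ℝ :=
  (1 / 2) * ∑ l, gVinv m x k l *
    (pd i (fun y => gV m y l j) x + pd j (fun y => gV m y l i) x
      - pd l (fun y => gV m y i j) x)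

-- toolkit
lemma pd_of_hasF {f : (Fin 4 → ℝ) → ℝ} {L : (Fin 4 → ℝ) →L[ℝ] ℝ} {x} (h : HasFDerivAt f L x)
    (i : Fin 4) : pd i f x = L (Pi.single i 1) := by rw [pd, h.fderiv]

lemma hasF1d {y : Fin 4 → ℝ} (j : Fin 4) {h : ℝ → ℝ} {h' : ℝ}
    (hh : HasDerivAt h h' (y j)) :
    HasFDerivAt (fun y : Fin 4 → ℝ => h (y j))
      (h' • ContinuousLinearMap.proj (R := ℝ) (φ := fun _ : Fin 4 => ℝ) j) y :=
  hh.comp_hasFDerivAt y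
    ((ContinuousLinearMap.proj (R := ℝ) (φ := fun _ : Fin 4 => ℝ) j).hasFDerivAt (x := y))

lemma pd_const (c : ℝ) (d : Fin 4) (y : Fin 4 → ℝ) : pd d (fun _ => c) y = 0 := by
  simp [pd]

lemma hasD_m {m : ℝ → ℝ} (hm : ContDiff ℝ (⊤ : ℕ∞) m) (t : ℝ) : HasDerivAt m (deriv m t) t :=
  (hm.differentiable (by simp) t).hasDerivAt

lemma hm' {m : ℝ → ℝ} (hm : ContDiff ℝ (⊤ : ℕ∞) m) : ContDiff ℝ ((⊤ : ℕ∞) : WithTop ℕ∞) (deriv m) :=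
  (contDiff_infty_iff_deriv.mp (hm.of_le (by simp))).2

lemma hasD_m' {m : ℝ → ℝ} (hm : ContDiff ℝ (⊤ : ℕ∞) m) (t : ℝ) :
    HasDerivAt (deriv m) (deriv (deriv m) t) t :=
  ((hm' hm).differentiable (by simp) t).hasDerivAt

-- pd of the metric component functions
lemma pdg00 {m : ℝ → ℝ} (hm : ContDiff ℝ (⊤ : ℕ∞) m) {y : Fin 4 → ℝ} (h1 : y 1 ≠ 0) (d : Fin 4) :
    pd d (fun z => -1 + 2 * m (z 0) / z 1) y =
      if d = 0 then 2 * deriv m (y 0) / y 1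
      else if d = 1 then -(2 * m (y 0)) / (y 1) ^ 2 else 0 := by
  have h := ((hasF1d (y := y) 0 ((hasD_m hm (y 0)).const_mul 2)).mul
    (hasF1d (y := y) 1 (hasDerivAt_inv h1))).const_add (-1)
  simp only [div_eq_mul_inv]
  refine (pd_of_hasF h d).trans ?_
  fin_cases d <;> simp [Pi.single_apply] <;> field_simp

lemma pdg22 {y : Fin 4 → ℝ} (d : Fin 4) :
    pd d (fun z => (z 1) ^ 2) y = if d = 1 then 2 * y 1 else 0 := by
  have h := hasF1d (y := y) 1 (hasDerivAt_pow 2 (y 1))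
  rw [pd_of_hasF h d]
  fin_cases d <;> simp [Pi.single_apply] <;> ring

lemma pdg33 {y : Fin 4 → ℝ} (d : Fin 4) :
    pd d (fun z => (z 1) ^ 2 * Real.sin (z 2) ^ 2) y =
      if d = 1 then 2 * y 1 * Real.sin (y 2) ^ 2
      else if d = 2 then 2 * (y 1) ^ 2 * Real.sin (y 2) * Real.cos (y 2) else 0 := by
  have h := (hasF1d (y := y) 1 (hasDerivAt_pow 2 (y 1))).mul
    (hasF1d (y := y) 2 ((Real.hasDerivAt_sin (y 2)).pow 2))
  refine (pd_of_hasF h d).trans ?_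
  fin_cases d <;> simp [Pi.single_apply] <;> ring

/-- Closed forms of the Christoffel symbols of the Vaidya metric. -/
def chrF (m : ℝ → ℝ) (k i j : Fin 4) : (Fin 4 → ℝ) → ℝ :=
  if k = 0 ∧ i = 0 ∧ j = 0 then fun y => -(m (y 0) / (y 1) ^ 2)
  else if k = 0 ∧ i = 2 ∧ j = 2 then fun y => y 1
  else if k = 0 ∧ i = 3 ∧ j = 3 then fun y => y 1 * Real.sin (y 2) ^ 2
  else if k = 1 ∧ i = 0 ∧ j = 0 then
    fun y => -(deriv m (y 0) / y 1) + m (y 0) / (y 1) ^ 2 - 2 * m (y 0) ^ 2 / (y 1) ^ 3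
  else if k = 1 ∧ ((i = 0 ∧ j = 1) ∨ (i = 1 ∧ j = 0)) then fun y => m (y 0) / (y 1) ^ 2
  else if k = 1 ∧ i = 2 ∧ j = 2 then fun y => 2 * m (y 0) - y 1
  else if k = 1 ∧ i = 3 ∧ j = 3 then fun y => (2 * m (y 0) - y 1) * Real.sin (y 2) ^ 2
  else if (k = 2 ∧ ((i = 1 ∧ j = 2) ∨ (i = 2 ∧ j = 1))) ∨
      (k = 3 ∧ ((i = 1 ∧ j = 3) ∨ (i = 3 ∧ j = 1))) then fun y => (y 1)⁻¹
  else if k = 2 ∧ i = 3 ∧ j = 3 then fun y => -(Real.sin (y 2) * Real.cos (y 2))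
  else if k = 3 ∧ ((i = 2 ∧ j = 3) ∨ (i = 3 ∧ j = 2)) then
    fun y => Real.cos (y 2) / Real.sin (y 2)
  else fun _ => 0

section pdchr
variable {m : ℝ → ℝ} {y : Fin 4 → ℝ}

lemma pdC1 (hm : ContDiff ℝ (⊤ : ℕ∞) m) (h1 : y 1 ≠ 0) (d : Fin 4) :
    pd d (fun z => -(m (z 0) / (z 1) ^ 2)) y =
      if d = 0 then -(deriv m (y 0) / (y 1) ^ 2)
      else if d = 1 then 2 * m (y 0) / (y 1) ^ 3 else 0 := by
  have h := ((hasF1d (y := y) 0 (hasD_m hm (y 0))).mul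
    (hasF1d (y := y) 1 ((hasDerivAt_pow 2 (y 1)).inv (pow_ne_zero 2 h1)))).neg
  simp only [div_eq_mul_inv]
  refine (pd_of_hasF h d).trans ?_
  fin_cases d <;> simp [Pi.single_apply] <;> field_simp <;> ring

lemma pdC5 (hm : ContDiff ℝ (⊤ : ℕ∞) m) (h1 : y 1 ≠ 0) (d : Fin 4) :
    pd d (fun z => m (z 0) / (z 1) ^ 2) y =
      if d = 0 then deriv m (y 0) / (y 1) ^ 2
      else if d = 1 then -(2 * m (y 0)) / (y 1) ^ 3 else 0 := by
  have h := (hasF1d (y := y) 0 (hasD_m hm (y 0))).mul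
    (hasF1d (y := y) 1 ((hasDerivAt_pow 2 (y 1)).inv (pow_ne_zero 2 h1)))
  simp only [div_eq_mul_inv]
  refine (pd_of_hasF h d).trans ?_
  fin_cases d <;> simp [Pi.single_apply] <;> field_simp <;> ring

lemma pdC2 (d : Fin 4) : pd d (fun z : Fin 4 → ℝ => z 1) y = if d = 1 then 1 else 0 := by
  have h := hasF1d (y := y) 1 (hasDerivAt_id' (x := y 1))
  rw [pd_of_hasF h d]
  fin_cases d <;> simp [Pi.single_apply]

lemma pdC3 (d : Fin 4) :
    pd d (fun z => z 1 * Real.sin (z 2) ^ 2) y =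
      if d = 1 then Real.sin (y 2) ^ 2
      else if d = 2 then 2 * y 1 * Real.sin (y 2) * Real.cos (y 2) else 0 := by
  have h := (hasF1d (y := y) 1 (hasDerivAt_id' (x := y 1))).mul
    (hasF1d (y := y) 2 ((Real.hasDerivAt_sin (y 2)).pow 2))
  refine (pd_of_hasF h d).trans ?_
  fin_cases d <;> simp [Pi.single_apply] <;> ring

lemma pdC4 (hm : ContDiff ℝ (⊤ : ℕ∞) m) (h1 : y 1 ≠ 0) (d : Fin 4) :
    pd d (fun z => -(deriv m (z 0) / z 1) + m (z 0) / (z 1) ^ 2 - 2 * m (z 0) ^ 2 / (z 1) ^ 3) y =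
      if d = 0 then
        -(deriv (deriv m) (y 0) / y 1) + deriv m (y 0) / (y 1) ^ 2
          - 4 * m (y 0) * deriv m (y 0) / (y 1) ^ 3
      else if d = 1 then
        deriv m (y 0) / (y 1) ^ 2 - 2 * m (y 0) / (y 1) ^ 3 + 6 * m (y 0) ^ 2 / (y 1) ^ 4
      else 0 := by
  have hT1 := ((hasF1d (y := y) 0 (hasD_m' hm (y 0))).mul
    (hasF1d (y := y) 1 (hasDerivAt_inv h1))).neg
  have hT2 := (hasF1d (y := y) 0 (hasD_m hm (y 0))).mul
    (hasF1d (y := y) 1 ((hasDerivAt_pow 2 (y 1)).inv (pow_ne_zero 2 h1)))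
  have hT3 := (((hasF1d (y := y) 0 ((hasD_m hm (y 0)).pow 2)).const_mul 2)).mul
    (hasF1d (y := y) 1 ((hasDerivAt_pow 3 (y 1)).inv (pow_ne_zero 3 h1)))
  have h := (hT1.add hT2).sub hT3
  simp only [div_eq_mul_inv]
  refine (pd_of_hasF h d).trans ?_
  fin_cases d <;> simp [Pi.single_apply] <;> field_simp <;> ring

lemma pdC6 (hm : ContDiff ℝ (⊤ : ℕ∞) m) (d : Fin 4) :
    pd d (fun z => 2 * m (z 0) - z 1) y =
      if d = 0 then 2 * deriv m (y 0) else if d = 1 then -1 else 0 := by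
  have h := (hasF1d (y := y) 0 ((hasD_m hm (y 0)).const_mul 2)).sub
    (hasF1d (y := y) 1 (hasDerivAt_id' (x := y 1)))
  refine (pd_of_hasF h d).trans ?_
  fin_cases d <;> simp [Pi.single_apply]

lemma pdC7 (hm : ContDiff ℝ (⊤ : ℕ∞) m) (d : Fin 4) :
    pd d (fun z => (2 * m (z 0) - z 1) * Real.sin (z 2) ^ 2) y =
      if d = 0 then 2 * deriv m (y 0) * Real.sin (y 2) ^ 2
      else if d = 1 then -Real.sin (y 2) ^ 2
      else if d = 2 then (2 * m (y 0) - y 1) * (2 * Real.sin (y 2) * Real.cos (y 2)) else 0 := by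
  have h := ((hasF1d (y := y) 0 ((hasD_m hm (y 0)).const_mul 2)).sub
      (hasF1d (y := y) 1 (hasDerivAt_id' (x := y 1)))).mul
    (hasF1d (y := y) 2 ((Real.hasDerivAt_sin (y 2)).pow 2))
  refine (pd_of_hasF h d).trans ?_
  fin_cases d <;> simp [Pi.single_apply] <;> ring

lemma pdC8 (h1 : y 1 ≠ 0) (d : Fin 4) :
    pd d (fun z : Fin 4 → ℝ => (z 1)⁻¹) y =
      if d = 1 then -((y 1) ^ 2)⁻¹ else 0 := by
  have h := hasF1d (y := y) 1 (hasDerivAt_inv h1)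
  rw [pd_of_hasF h d]
  fin_cases d <;> simp [Pi.single_apply]

lemma pdC9 (d : Fin 4) :
    pd d (fun z => -(Real.sin (z 2) * Real.cos (z 2))) y =
      if d = 2 then Real.sin (y 2) ^ 2 - Real.cos (y 2) ^ 2 else 0 := by
  have h := ((hasF1d (y := y) 2 (Real.hasDerivAt_sin (y 2))).mul
    (hasF1d (y := y) 2 (Real.hasDerivAt_cos (y 2)))).neg
  refine (pd_of_hasF h d).trans ?_
  fin_cases d <;> simp [Pi.single_apply] <;> ring

lemma pdC10 (h2 : Real.sin (y 2) ≠ 0) (d : Fin 4) :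
    pd d (fun z => Real.cos (z 2) / Real.sin (z 2)) y =
      if d = 2 then -(1 / Real.sin (y 2) ^ 2) else 0 := by
  have h := hasF1d (y := y) 2 ((Real.hasDerivAt_cos (y 2)).div (Real.hasDerivAt_sin (y 2)) h2)
  refine (pd_of_hasF h d).trans ?_
  have hs := Real.sin_sq_add_cos_sq (y 2)
  fin_cases d <;> simp [Pi.single_apply] <;> field_simp <;> nlinarith [hs]

end pdchr

set_option maxHeartbeats 2000000 in
lemma chr_eq {m : ℝ → ℝ} (hm : ContDiff ℝ (⊤ : ℕ∞) m) {y : Fin 4 → ℝ}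
    (h1 : y 1 ≠ 0) (h2 : Real.sin (y 2) ≠ 0) (k i j : Fin 4) :
    Chr m y k i j = chrF m k i j y := by
  fin_cases k <;> fin_cases i <;> fin_cases j <;>
    (simp [Chr, Fin.sum_univ_four, gVinv, gV, chrF, pdg00 hm h1, pdg22, pdg33, pd_const];
     try field_simp;
     try ring)

/-- Riemann–Christoffel curvature tensor `R_{ijkl}` (0,4-form),
`R_{ijkl} = g_{lp}(∂_i Γ^p_{jk} - ∂_j Γ^p_{ik} + Γ^p_{iq}Γ^q_{jk} - Γ^p_{jq}Γ^q_{ik})`. -/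
def Riem (m : ℝ → ℝ) (x : Fin 4 → ℝ) (i j k l : Fin 4) : ℝ :=
  ∑ p, gV m x l p *
    (pd i (fun y => Chr m y p j k) x - pd j (fun y => Chr m y p i k) x
      + ∑ q, (Chr m x p i q * Chr m x q j k - Chr m x p j q * Chr m x q i k))

/-- Ricci tensor `S_{ij} = ∂_k Γ^k_{ij} - ∂_i Γ^k_{kj} + Γ^k_{kl}Γ^l_{ij} - Γ^k_{il}Γ^l_{kj}`. -/
def Ric (m : ℝ → ℝ) (x : Fin 4 → ℝ) (i j : Fin 4) : ℝ :=
  ∑ k, (pd k (fun y => Chr m y k i j) x - pd i (fun y => Chr m y k k j) x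
    + ∑ l, (Chr m x k k l * Chr m x l i j - Chr m x k i l * Chr m x l k j))

lemma pd_chr {m : ℝ → ℝ} (hm : ContDiff ℝ (⊤ : ℕ∞) m) {x : Fin 4 → ℝ}
    (h1 : x 1 ≠ 0) (h2 : Real.sin (x 2) ≠ 0) (d k i j : Fin 4) :
    pd d (fun y => Chr m y k i j) x = pd d (chrF m k i j) x := by
  have e1 : ∀ᶠ y in nhds x, y 1 ≠ 0 := (continuous_apply 1).continuousAt.eventually_ne h1
  have e2 : ∀ᶠ y in nhds x, Real.sin (y 2) ≠ 0 :=
    (Real.continuous_sin.comp (continuous_apply 2)).continuousAt.eventually_ne h2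
  have he : (fun y => Chr m y k i j) =ᶠ[nhds x] chrF m k i j := by
    filter_upwards [e1, e2] with y hy1 hy2
    exact chr_eq hm hy1 hy2 k i j
  unfold pd
  rw [he.fderiv_eq]
set_option maxHeartbeats 4000000 in
lemma Ric_eq {m : ℝ → ℝ} (hm : ContDiff ℝ (⊤ : ℕ∞) m) {x : Fin 4 → ℝ}
    (h1 : x 1 ≠ 0) (h2 : Real.sin (x 2) ≠ 0) (i j : Fin 4) :
    Ric m x i j = if i = 0 ∧ j = 0 then -(2 * deriv m (x 0)) / (x 1) ^ 2 else 0 := by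
  fin_cases i <;> fin_cases j <;>
    (simp [Ric, Fin.sum_univ_four, pd_chr hm h1 h2, chr_eq hm h1 h2, chrF,
       pdC1 hm h1, pdC5 hm h1, pdC2, pdC3, pdC4 hm h1, pdC6 hm, pdC7 hm,
       pdC8 h1, pdC9, pdC10 h2, pd_const];
     try field_simp;
     try ring;
     try linear_combination (-(x 1 ^ 6 * Real.sin (x 2) ^ 2)) * Real.sin_sq_add_cos_sq (x 2);
     try linear_combination (-(x 1)) * Real.sin_sq_add_cos_sq (x 2);
     try tauto)

set_option maxHeartbeats 4000000 in
lemma Riem1_eq {m : ℝ → ℝ} (hm : ContDiff ℝ (⊤ : ℕ∞) m) {x : Fin 4 → ℝ}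
    (h1 : x 1 ≠ 0) (h2 : Real.sin (x 2) ≠ 0) (a j k : Fin 4) :
    Riem m x 1 a j k =
      if a = 0 ∧ j = 0 ∧ k = 1 then -(2 * m (x 0)) / (x 1) ^ 3
      else if a = 0 ∧ j = 1 ∧ k = 0 then 2 * m (x 0) / (x 1) ^ 3
      else if a = 2 ∧ j = 0 ∧ k = 2 then -(m (x 0)) / x 1
      else if a = 2 ∧ j = 2 ∧ k = 0 then m (x 0) / x 1
      else if a = 3 ∧ j = 0 ∧ k = 3 then -(m (x 0)) * Real.sin (x 2) ^ 2 / x 1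
      else if a = 3 ∧ j = 3 ∧ k = 0 then m (x 0) * Real.sin (x 2) ^ 2 / x 1
      else 0 := by
  fin_cases a <;> fin_cases j <;> fin_cases k <;>
    (simp [Riem, Fin.sum_univ_four, pd_chr hm h1 h2, chr_eq hm h1 h2, chrF, gV,
       pdC1 hm h1, pdC5 hm h1, pdC2, pdC3, pdC4 hm h1, pdC6 hm, pdC7 hm,
       pdC8 h1, pdC9, pdC10 h2, pd_const];
     try field_simp;
     try ring;
     try linear_combination (-(x 1 ^ 6 * Real.sin (x 2) ^ 2)) * Real.sin_sq_add_cos_sq (x 2);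
     try tauto)

/-- Scalar curvature `κ = g^{ij} S_{ij}`. -/
def Scal (m : ℝ → ℝ) (x : Fin 4 → ℝ) : ℝ :=
  ∑ i, ∑ j, gVinv m x i j * Ric m x i j

/-- Kulkarni–Nomizu product of two symmetric (0,2)-tensors. -/
def KN (A E : Fin 4 → Fin 4 → ℝ) (i j k l : Fin 4) : ℝ :=
  A i l * E j k + A j k * E i l - A i k * E j l - A j l * E i k

/-- Conharmonic curvature tensor `K = R - (1/(n-2)) g∧S`, `n = 4`. -/
def Conh (m : ℝ → ℝ) (x : Fin 4 → ℝ) (i j k l : Fin 4) : ℝ :=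
  Riem m x i j k l - (1 / 2) * KN (gV m x) (Ric m x) i j k l

/-- Weyl conformal curvature tensor `C = K + κ/((n-1)(n-2)) · 𝔊`, `𝔊 = (1/2) g∧g`, `n = 4`. -/
def Weyl (m : ℝ → ℝ) (x : Fin 4 → ℝ) (i j k l : Fin 4) : ℝ :=
  Conh m x i j k l + Scal m x / 6 * ((1 / 2) * KN (gV m x) (gV m x) i j k l)

lemma Scal_eq {m : ℝ → ℝ} (hm : ContDiff ℝ (⊤ : ℕ∞) m) {x : Fin 4 → ℝ}
    (h1 : x 1 ≠ 0) (h2 : Real.sin (x 2) ≠ 0) : Scal m x = 0 := by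
  simp [Scal, Fin.sum_univ_four, Ric_eq hm h1 h2, gVinv]

set_option maxHeartbeats 1000000 in
lemma Weyl1_eq {m : ℝ → ℝ} (hm : ContDiff ℝ (⊤ : ℕ∞) m) {x : Fin 4 → ℝ}
    (h1 : x 1 ≠ 0) (h2 : Real.sin (x 2) ≠ 0) (a j k : Fin 4) :
    Weyl m x 1 a j k =
      if a = 0 ∧ j = 0 ∧ k = 1 then -(2 * m (x 0)) / (x 1) ^ 3
      else if a = 0 ∧ j = 1 ∧ k = 0 then 2 * m (x 0) / (x 1) ^ 3
      else if a = 2 ∧ j = 0 ∧ k = 2 then -(m (x 0)) / x 1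
      else if a = 2 ∧ j = 2 ∧ k = 0 then m (x 0) / x 1
      else if a = 3 ∧ j = 0 ∧ k = 3 then -(m (x 0)) * Real.sin (x 2) ^ 2 / x 1
      else if a = 3 ∧ j = 3 ∧ k = 0 then m (x 0) * Real.sin (x 2) ^ 2 / x 1
      else 0 := by
  fin_cases a <;> fin_cases j <;> fin_cases k <;>
    (simp [Weyl, Conh, KN, Scal_eq hm h1 h2, Riem1_eq hm h1 h2, Ric_eq hm h1 h2, gV];
     try ring)

/-- Concircular curvature tensor `W = R - κ/(n(n-1)) · 𝔊`, `n = 4`. -/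
def Conc (m : ℝ → ℝ) (x : Fin 4 → ℝ) (i j k l : Fin 4) : ℝ :=
  Riem m x i j k l - Scal m x / 12 * ((1 / 2) * KN (gV m x) (gV m x) i j k l)

/-- Projective curvature tensor `P = R - (1/(n-1)) ∧_S`, `n = 4`. -/
def Proj (m : ℝ → ℝ) (x : Fin 4 → ℝ) (i j k l : Fin 4) : ℝ :=
  Riem m x i j k l - (1 / 3) * (Ric m x j k * gV m x i l - Ric m x i k * gV m x j l)

/-- Components of the endomorphism `𝒟(X,Y)` associated with a (0,4)-tensor `D`:
`(𝒟_{ab})^p_q = g^{ps} D_{abqs}`. -/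
def endo (m : ℝ → ℝ) (x : Fin 4 → ℝ) (D : Fin 4 → Fin 4 → Fin 4 → Fin 4 → ℝ)
    (a b p q : Fin 4) : ℝ :=
  ∑ s, gVinv m x p s * D a b q s

/-- The (0,6)-tensor `D·H` obtained by the action of the curvature operator of `D` on
a (0,4)-tensor `H`. -/
def tdot (m : ℝ → ℝ) (x : Fin 4 → ℝ)
    (D H : Fin 4 → Fin 4 → Fin 4 → Fin 4 → ℝ) (i j k l a b : Fin 4) : ℝ :=
  -(∑ p, (endo m x D a b p i * H p j k l + endo m x D a b p j * H i p k l
      + endo m x D a b p k * H i j p l + endo m x D a b p l * H i j k p))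

/-- Tachibana tensor `Q(A,H)` of a symmetric (0,2)-tensor `A` and a (0,4)-tensor `H`. -/
def Tach (A : Fin 4 → Fin 4 → ℝ) (H : Fin 4 → Fin 4 → Fin 4 → Fin 4 → ℝ)
    (i j k l a b : Fin 4) : ℝ :=
  A a i * H b j k l + A a j * H i b k l + A a k * H i j b l + A a l * H i j k b
    - (A b i * H a j k l + A b j * H i a k l + A b k * H i j a l + A b l * H i j k a)

/-- Covariant derivative `T_{ij,k}` of a (0,2)-tensor field, derivative index first. -/
def covS (m : ℝ → ℝ) (x : Fin 4 → ℝ) (T : (Fin 4 → ℝ) → Fin 4 → Fin 4 → ℝ)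
    (k i j : Fin 4) : ℝ :=
  pd k (fun y => T y i j) x - ∑ l, Chr m x l k i * T x l j - ∑ l, Chr m x l k j * T x i l

/-- Covariant derivative `D_{ijkl,p}` of a (0,4)-tensor field, derivative index first. -/
def covR (m : ℝ → ℝ) (x : Fin 4 → ℝ)
    (D : (Fin 4 → ℝ) → Fin 4 → Fin 4 → Fin 4 → Fin 4 → ℝ) (p i j k l : Fin 4) : ℝ :=
  pd p (fun y => D y i j k l) x
    - ∑ q, Chr m x q p i * D x q j k l - ∑ q, Chr m x q p j * D x i q k l
    - ∑ q, Chr m x q p k * D x i j q l - ∑ q, Chr m x q p l * D x i j k q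

/-- The symmetry orbit of an index quadruple under the standard symmetries
`D_{ijkl} = -D_{jikl} = -D_{ijlk} = D_{klij}` of a generalized curvature tensor. -/
def orb (t : Fin 4 × Fin 4 × Fin 4 × Fin 4) : Set (Fin 4 × Fin 4 × Fin 4 × Fin 4) :=
  {(t.1, t.2.1, t.2.2.1, t.2.2.2), (t.2.1, t.1, t.2.2.1, t.2.2.2),
   (t.1, t.2.1, t.2.2.2, t.2.2.1), (t.2.1, t.1, t.2.2.2, t.2.2.1),
   (t.2.2.1, t.2.2.2, t.1, t.2.1), (t.2.2.2, t.2.2.1, t.1, t.2.1),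
   (t.2.2.1, t.2.2.2, t.2.1, t.1), (t.2.2.2, t.2.2.1, t.2.1, t.1)}

/-- Energy–momentum tensor of the Vaidya metric via Einstein's field equations. -/
def EMT (c G : ℝ) (m : ℝ → ℝ) (y : Fin 4 → ℝ) (i j : Fin 4) : ℝ :=
  c ^ 4 / (8 * π * G) * (Ric m y i j - Scal m y / 2 * gV m y i j)

set_option maxHeartbeats 4000000 in
theorem vaidya_ricci_weyl_compatible (m : ℝ → ℝ) (hm : ContDiff ℝ (⊤ : ℕ∞) m)
    (x : Fin 4 → ℝ) (hr : 0 < x 1) (hθ1 : 0 < x 2) (hθ2 : x 2 < π) :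
    ∀ a i j k : Fin 4,
      ∑ p, ((∑ q, gVinv m x p q * Ric m x q i) * Weyl m x p a j k +
        (∑ q, gVinv m x p q * Ric m x q j) * Weyl m x p a k i +
        (∑ q, gVinv m x p q * Ric m x q k) * Weyl m x p a i j) = 0 := by
  have h1 : x 1 ≠ 0 := ne_of_gt hr
  have h2 : Real.sin (x 2) ≠ 0 := (Real.sin_pos_of_pos_of_lt_pi hθ1 hθ2).ne'
  intro a i j k
  fin_cases a <;> fin_cases i <;> fin_cases j <;> fin_cases k <;>
    (simp [Fin.sum_univ_four, gVinv, Ric_eq hm h1 h2, Weyl1_eq hm h1 h2];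
     try ring)
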